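/- arXiv:2001.01148 — 4 statements merged into one kernel-verified Lean document; each statement's English description precedes it below -/
import Mathlib

section
/- The kernel K̄1(ε,u) := (u-ε)·K̄0(ε,u) satisfies the anti-symmetry relation w(ε)·K̄1(ε,u) = -w(u)·K̄1(u,ε) for all real ε, u, where K̄0(ε,u) = (n0(u-ε) + f0(u))·(u-ε)²·sgn(u-ε) and w(x) = f0(x)(1-f0(x)). -/
open MeasureTheory Real

noncomputable def f0 (x : ℝ) : ℝ := 1 / (Real.exp x + 1)
noncomputable def n0 (y : ℝ) : ℝ := 1 / (Real.exp y - 1)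
noncomputable def w (x : ℝ) : ℝ := f0 x * (1 - f0 x)
noncomputable def k0 (x y : ℝ) : ℝ := (n0 y + f0 (y + x)) * y ^ 2 * Real.sign y
noncomputable def K0bar (e u : ℝ) : ℝ := (n0 (u - e) + f0 u) * (u - e) ^ 2 * Real.sign (u - e)
noncomputable def Gamma0 (e : ℝ) : ℝ := ∫ u, K0bar e u
noncomputable def gamma0 (x : ℝ) : ℝ := ∫ y, k0 x y

noncomputable def K1bar (e u : ℝ) : ℝ := (u - e) * K0bar e u

theorem antisymmetry_K1 (e u : ℝ) : w e * K1bar e u = -(w u * K1bar u e) := by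
  rcases eq_or_ne u e with h | h
  · subst h; simp [K1bar, K0bar, sub_self, Real.sign_zero]
  · have hs : Real.sign (e - u) = -Real.sign (u - e) := by
      rw [show e - u = -(u - e) by ring, Real.sign_neg]
    have hA := Real.exp_pos e
    have hB := Real.exp_pos u
    have hA1 : Real.exp e + 1 ≠ 0 := by positivity
    have hB1 : Real.exp u + 1 ≠ 0 := by positivity
    have hAB : Real.exp u ≠ Real.exp e := fun hh => h (Real.exp_injective hh)
    have h1 : Real.exp u / Real.exp e - 1 ≠ 0 := by
      intro hh; apply hAB; field_simp at hh; linarith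
    have h2 : Real.exp e / Real.exp u - 1 ≠ 0 := by
      intro hh; apply hAB; field_simp at hh; linarith
    have h3 : Real.exp u - Real.exp e ≠ 0 := sub_ne_zero.mpr hAB
    have h4 : Real.exp e - Real.exp u ≠ 0 := sub_ne_zero.mpr (Ne.symm hAB)
    unfold K1bar K0bar w f0 n0
    rw [Real.exp_sub, Real.exp_sub, hs]
    field_simp
    ring
end

section
/- The kernel K̄2(ε,u) := (u-ε)²·K̄0(ε,u) satisfies the symmetry relation w(ε)·K̄2(ε,u) = w(u)·K̄2(u,ε) for all real ε, u. -/
open MeasureTheory Real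

noncomputable def K2bar (e u : ℝ) : ℝ := (u - e) ^ 2 * K0bar e u

lemma key (e u : ℝ) (h : e < u) :
    w e * K2bar e u = w u * K2bar u e := by
  have ha : Real.exp e ≠ 0 := Real.exp_ne_zero e
  have hb : Real.exp u ≠ 0 := Real.exp_ne_zero u
  have hba : Real.exp u - Real.exp e ≠ 0 := sub_ne_zero.mpr (Real.exp_lt_exp.mpr h).ne'
  have hab : Real.exp e - Real.exp u ≠ 0 := sub_ne_zero.mpr (Real.exp_lt_exp.mpr h).ne
  have h3 : Real.exp e + 1 ≠ 0 := by positivity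
  have h4 : Real.exp u + 1 ≠ 0 := by positivity
  have e1 : Real.exp (u - e) - 1 = (Real.exp u - Real.exp e) / Real.exp e := by
    rw [Real.exp_sub]; field_simp
  have e2 : Real.exp (e - u) - 1 = (Real.exp e - Real.exp u) / Real.exp u := by
    rw [Real.exp_sub]; field_simp
  have main : w e * (n0 (u - e) + f0 u) = -(w u * (n0 (e - u) + f0 e)) := by
    simp only [w, n0, f0, e1, e2, one_div_div]
    field_simp
    ring
  simp only [K2bar, K0bar, Real.sign_of_pos (by linarith : (0:ℝ) < u - e),
    Real.sign_of_neg (by linarith : e - u < 0)]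
  linear_combination ((u - e) ^ 4) * main

theorem symmetry_K2 (e u : ℝ) : w e * K2bar e u = w u * K2bar u e := by
  rcases lt_trichotomy e u with h | h | h
  · exact key e u h
  · subst h; rfl
  · exact (key u e h).symm
end

section
/- The function γ0(x) := ∫_ℝ k0(x,y) dy, where k0(x,y) = (n0(y)+f0(y+x))y²sgn(y), is an even function of x: γ0(-x) = γ0(x) for all real x. -/
open MeasureTheory Real

lemma k0_neg_neg (x y : ℝ) : k0 (-x) (-y) = k0 x y := by
  rcases eq_or_ne y 0 with h | h
  · simp [k0, h]
  · have hy : Real.exp y - 1 ≠ 0 := by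
      rw [sub_ne_zero, ← Real.exp_zero]
      exact fun hh => h (Real.exp_injective hh)
    have hy2 : 1 - Real.exp y ≠ 0 := fun hh => hy (by linarith [sub_eq_zero.mp hh])
    have he : Real.exp y ≠ 0 := (Real.exp_pos y).ne'
    have hp : Real.exp (y + x) + 1 ≠ 0 := by positivity
    unfold k0 n0 f0
    rw [show (-y + -x) = -(y + x) by ring, Real.sign_neg, Real.exp_neg, Real.exp_neg]
    have hy' : (Real.exp y)⁻¹ - 1 ≠ 0 :=
      sub_ne_zero.mpr fun hh => (sub_ne_zero.mp hy) (inv_eq_one.mp hh)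
    have hp' : (Real.exp (y + x))⁻¹ + 1 ≠ 0 := by positivity
    field_simp
    ring

theorem gamma0_even (x : ℝ) : gamma0 (-x) = gamma0 x := by
  unfold gamma0
  rw [← integral_neg_eq_self (fun y => k0 (-x) y)]
  simp only [k0_neg_neg]
end

section
/- The function γ0(x) = ∫_ℝ (n0(y)+f0(y+x))·y²·sgn(y) dy is monotonically non-decreasing on [0,∞): for 0 ≤ x₁ ≤ x₂, γ0(x₁) ≤ γ0(x₂). -/
open MeasureTheory Real

/-! The `n0` part of the integrand does not depend on `x`, so `γ0 x₂ - γ0 x₁` is the integral of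
`(f0 (y + x₂) - f0 (y + x₁)) y² sgn y`. Pairing `y` with `-y` and using the closed form
`f0 (x + y) - f0 (x - y) = -sinh y / (cosh x + cosh y)`, the symmetrized integrand becomes
`y² |sinh y| ((cosh x₁ + cosh y)⁻¹ - (cosh x₂ + cosh y)⁻¹)`, which is nonnegative because `cosh`
increases on `[0, ∞)`. Integrability of `k0 x` reduces to `y > 0` through the symmetry
`k0 (-x) (-y) = k0 x y`, and there the integrand decays like `y² e^{-y}`. -/

lemma Real.measurable_sign : Measurable Real.sign :=
  Measurable.ite measurableSet_Iio measurable_const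
    (Measurable.ite measurableSet_Ioi measurable_const measurable_const)

lemma Real.sign_mul_sinh_nonneg (y : ℝ) : 0 ≤ Real.sign y * sinh y := by
  rcases lt_trichotomy y 0 with hy | rfl | hy
  · rw [Real.sign_of_neg hy]
    linarith [Real.sinh_neg_iff.2 hy]
  · simp
  · rw [Real.sign_of_pos hy]
    linarith [Real.sinh_pos_iff.2 hy]

lemma integrableOn_pow_mul_exp_neg_mul (n : ℕ) {b : ℝ} (hb : 0 < b) :
    IntegrableOn (fun y : ℝ => y ^ n * exp (-(b * y))) (Set.Ioi 0) := by
  simpa using integrableOn_rpow_mul_exp_neg_mul_rpow (s := n) (p := 1)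
    (by linarith [n.cast_nonneg (α := ℝ)]) one_pos hb

lemma integral_nonneg_of_add_comp_neg_nonneg {G : Type*} [MeasurableSpace G] [AddGroup G]
    [MeasurableNeg G] {μ : Measure G} [μ.IsNegInvariant] {f : G → ℝ}
    (h : ∀ x, 0 ≤ f x + f (-x)) : 0 ≤ ∫ x, f x ∂μ := by
  by_cases hf : Integrable f μ
  · have : ∫ x, (f x + f (-x)) ∂μ = 2 * ∫ x, f x ∂μ := by
      rw [integral_add hf hf.comp_neg, integral_neg_eq_self]
      ring
    linarith [integral_nonneg (μ := μ) (f := fun x => f x + f (-x)) h]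
  · rw [integral_undef hf]

lemma f0_neg (u : ℝ) : f0 (-u) = 1 - f0 u := by
  unfold f0
  rw [Real.exp_neg]
  field_simp
  ring

lemma f0_le_exp_neg (u : ℝ) : f0 u ≤ exp (-u) := by
  rw [f0, Real.exp_neg, ← one_div]
  exact one_div_le_one_div_of_le (exp_pos u) (by linarith)

lemma f0_add_sub_f0_sub (x y : ℝ) :
    f0 (x + y) - f0 (x - y) = -(sinh y / (cosh x + cosh y)) := by
  have : 0 < cosh x + cosh y := by positivity
  rw [Real.sinh_eq, Real.cosh_eq, Real.cosh_eq]
  unfold f0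
  rw [Real.exp_add, Real.exp_sub, Real.exp_neg, Real.exp_neg]
  field_simp
  ring

lemma n0_neg {y : ℝ} (hy : y ≠ 0) : n0 (-y) = -1 - n0 y := by
  have : exp y - 1 ≠ 0 := sub_ne_zero.2 (by simpa using hy)
  have : 1 - exp y ≠ 0 := fun h => this (by linarith)
  unfold n0
  rw [Real.exp_neg]
  field_simp
  ring

lemma n0_mul_sq_le {y : ℝ} (hy : 0 < y) : n0 y * y ^ 2 ≤ y * exp (-(y / 2)) := by
  have hden : y * exp (y / 2) ≤ exp y - 1 := by
    have hsinh : y / 2 ≤ sinh (y / 2) := Real.self_le_sinh_iff.2 (by positivity)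
    have hsq : exp y = exp (y / 2) ^ 2 := by rw [← Real.exp_nat_mul]; ring_nf
    have : exp y - 1 = 2 * sinh (y / 2) * exp (y / 2) := by
      rw [Real.sinh_eq, Real.exp_neg, hsq]
      field_simp
    rw [this]
    gcongr
    linarith
  calc n0 y * y ^ 2 = y ^ 2 / (exp y - 1) := by rw [n0, one_div_mul_eq_div]
    _ ≤ y ^ 2 / (y * exp (y / 2)) := by gcongr
    _ = y * exp (-(y / 2)) := by rw [Real.exp_neg]; field_simp

lemma k0_sub_add_k0_sub_neg (x₁ x₂ y : ℝ) :
    (k0 x₂ y - k0 x₁ y) + (k0 x₂ (-y) - k0 x₁ (-y)) =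
      y ^ 2 * (Real.sign y * sinh y) * ((cosh x₁ + cosh y)⁻¹ - (cosh x₂ + cosh y)⁻¹) := by
  have h₁ := f0_add_sub_f0_sub x₁ y
  have h₂ := f0_add_sub_f0_sub x₂ y
  simp only [k0, Real.sign_neg, neg_sq, neg_add_eq_sub, add_comm y]
  linear_combination (y ^ 2 * Real.sign y) * (h₂ - h₁)

lemma measurable_k0 (x : ℝ) : Measurable (k0 x) := by
  unfold k0 n0 f0
  exact Measurable.mul (by fun_prop) Real.measurable_sign

lemma integrableOn_k0_Ioi (x : ℝ) : IntegrableOn (k0 x) (Set.Ioi 0) := by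
  have hg := (integrableOn_pow_mul_exp_neg_mul 1 (b := 1 / 2) (by norm_num)).add
    ((integrableOn_pow_mul_exp_neg_mul 2 one_pos).const_mul (exp (-x)))
  refine hg.mono' (measurable_k0 x).aestronglyMeasurable ?_
  filter_upwards [ae_restrict_mem measurableSet_Ioi] with y (hy : 0 < y)
  have hn0 : 0 < n0 y := one_div_pos.2 (sub_pos.2 (Real.one_lt_exp_iff.2 hy))
  have hf0 : 0 < f0 (y + x) := by unfold f0; positivity
  have hk0 : k0 x y = n0 y * y ^ 2 + f0 (y + x) * y ^ 2 := by
    rw [k0, Real.sign_of_pos hy]; ring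
  have hf0_le : f0 (y + x) * y ^ 2 ≤ exp (-x) * (y ^ 2 * exp (-(1 * y))) := by
    calc f0 (y + x) * y ^ 2 ≤ exp (-(y + x)) * y ^ 2 := by gcongr; exact f0_le_exp_neg _
      _ = _ := by rw [one_mul, neg_add, Real.exp_add]; ring
  rw [Real.norm_of_nonneg (by rw [hk0]; positivity), hk0]
  simp only [Pi.add_apply, pow_one]
  linarith [n0_mul_sq_le hy, show y * exp (-(y / 2)) = y * exp (-(1 / 2 * y)) by ring_nf]

lemma integrable_k0 (x : ℝ) : Integrable (k0 x) := by
  have hneg : IntegrableOn (k0 x) (Set.Iio 0) := by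
    have h : IntegrableOn (fun y => k0 (-x) (-y)) (Set.Iio 0) :=
      IntegrableOn.comp_neg_Iio (μ := volume) (f := k0 (-x)) (c := (0 : ℝ))
        (by simpa using integrableOn_k0_Ioi (-x))
    simpa only [k0_neg_neg] using h
  rw [← integrableOn_univ, ← Set.Iio_union_Ici]
  exact hneg.union (Iff.mpr integrableOn_Ici_iff_integrableOn_Ioi (integrableOn_k0_Ioi x))

theorem gamma0_monotone (x₁ x₂ : ℝ) (h0 : 0 ≤ x₁) (h12 : x₁ ≤ x₂) :
    gamma0 x₁ ≤ gamma0 x₂ := by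
  have hcosh : cosh x₁ ≤ cosh x₂ := by
    rwa [Real.cosh_le_cosh, abs_of_nonneg h0, abs_of_nonneg (h0.trans h12)]
  rw [← sub_nonneg, gamma0, gamma0, ← integral_sub (integrable_k0 x₂) (integrable_k0 x₁)]
  refine integral_nonneg_of_add_comp_neg_nonneg fun y => ?_
  rw [k0_sub_add_k0_sub_neg]
  have hinv : (cosh x₂ + cosh y)⁻¹ ≤ (cosh x₁ + cosh y)⁻¹ :=
    inv_anti₀ (by positivity) (by gcongr)
  exact mul_nonneg (mul_nonneg (sq_nonneg y) (Real.sign_mul_sinh_nonneg y)) (sub_nonneg.2 hinv)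
end
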